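/- Let p be an odd prime, n ≥ 1, α ∈ Z_p, and 0 ≤ j < p^{n-1} with α ≡ j mod p^{n-1}. Then the series ∑_{i≥0} binom(p^{-1}u_n, i)·((exp(αp) − exp(jp))/exp(jp))^i converges in Λ[1/p], where Λ = Z_p[[T]]⟨T^{p^{n-1}}/p⟩ and u_n = log(1+T), because ((exp(αp) − exp(jp))/exp(jp))^i ∈ p^{in}Z_p and binom(p^{-1}u_n, i) ∈ p^{-i(n − p/(p-1))}Λ. -/

import Mathlib

open Filter

/-- The `p`-adic exponential `exp(x) = ∑_{n ≥ 0} x^n / n!` (convergent on `pℤ_p` for `p` odd). -/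
noncomputable def padicExp {p : ℕ} [Fact p.Prime] (x : ℚ_[p]) : ℚ_[p] :=
  ∑' n : ℕ, ((n.factorial : ℚ_[p]))⁻¹ * x ^ n

/-- The formal logarithm `log(1+T) = ∑_{k ≥ 1} (-1)^{k+1} T^k / k` in `ℚ_p[[T]]`. -/
noncomputable def logOnePlusT (p : ℕ) [Fact p.Prime] : PowerSeries ℚ_[p] :=
  PowerSeries.mk fun k => if k = 0 then 0 else (-1) ^ (k + 1) / (k : ℚ_[p])

/-- Membership in `p^s·Λ` where `Λ = ℤ_p[[T]]⟨T^{p^{n-1}}/p⟩`, described inside `ℚ_p[[T]]`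
coefficientwise. -/
def MemLambda (p n : ℕ) [Fact p.Prime] (s : ℝ) (f : PowerSeries ℚ_[p]) : Prop :=
  (∀ k : ℕ, ‖PowerSeries.coeff k f‖ ≤ (p : ℝ) ^ (-s) * (p : ℝ) ^ (k / p ^ (n - 1))) ∧
    Tendsto (fun k : ℕ => ‖PowerSeries.coeff k f‖ / (p : ℝ) ^ (k / p ^ (n - 1)))
      atTop (nhds 0)

/-- The generalized binomial coefficient `binom(p^{-1}u_n, i)` in `Λ[1/p]`, `u_n = log(1+T)`. -/
noncomputable def binomGM (p : ℕ) [Fact p.Prime] (i : ℕ) : PowerSeries ℚ_[p] :=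
  PowerSeries.C ((i.factorial : ℚ_[p]))⁻¹ *
    ∏ t ∈ Finset.range i,
      (PowerSeries.C ((p : ℚ_[p]))⁻¹ * logOnePlusT p - (t : PowerSeries ℚ_[p]))

/-- The element `c = (exp(αp) − exp(jp))/exp(jp)` of `ℚ_p`. -/
noncomputable def twistElt {p : ℕ} [Fact p.Prime] (α : ℚ_[p]) (j : ℕ) : ℚ_[p] :=
  (padicExp (α * (p : ℚ_[p])) - padicExp ((j : ℚ_[p]) * (p : ℚ_[p]))) / padicExp ((j : ℚ_[p]) * (p : ℚ_[p]))

/-!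
Model `p^s Λ` inside `ℚ_p[[T]]` as the power series whose `k`-th coefficient is bounded by
`p^{-s} w(k)` and is `o(w(k))`, for the weight `w(k) = p^⌊k/p^{n-1}⌋`. As `w` is
submultiplicative and `ℚ_p` is ultrametric, these balls are stable under sums and multiply
like their radii.

Each factor `p^{-1}u_n - t` of `binom(p^{-1}u_n, i)` lies in `p^{-(n-1)}Λ`, because
`v_p(k) + 1 ≤ (n - 1) + ⌊k/p^{n-1}⌋`, and dividing by `i!` costs `v_p(i!) ≤ i/(p-1) ≤ i/2`.
Since `exp` is `1`-Lipschitz and of norm `1` on `pℤ_p` for odd `p`, the twist satisfies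
`|c| ≤ p^{-n}`. So the `i`-th term lies in `p^{i/2}Λ`, and the tails of the series lie in any
prescribed `p^sΛ`.
-/

open Topology PowerSeries

structure SubmultiplicativeWeight (w : ℕ → ℝ) : Prop where
  pos : ∀ k, 0 < w k
  one_le_zero : 1 ≤ w 0
  mul_le : ∀ a b, w a * w b ≤ w (a + b)

lemma SubmultiplicativeWeight.mul_le_mul {w : ℕ → ℝ} (hw : SubmultiplicativeWeight w)
    {u v A B : ℝ} {a b : ℕ} (hu₀ : 0 ≤ u) (hv₀ : 0 ≤ v) (hu : u ≤ A * w a) (hv : v ≤ B * w b) :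
    u * v ≤ A * B * w (a + b) := by
  have hA : 0 ≤ A := (mul_nonneg_iff_of_pos_right (hw.pos a)).1 (hu₀.trans hu)
  have hB : 0 ≤ B := (mul_nonneg_iff_of_pos_right (hw.pos b)).1 (hv₀.trans hv)
  calc u * v ≤ (A * w a) * (B * w b) := _root_.mul_le_mul hu hv hv₀ (hu₀.trans hu)
    _ = A * B * (w a * w b) := by ring
    _ ≤ A * B * w (a + b) := mul_le_mul_of_nonneg_left (hw.mul_le a b) (mul_nonneg hA hB)

lemma SubmultiplicativeWeight.pow_div {b : ℝ} (hb : 1 ≤ b) (q : ℕ) :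
    SubmultiplicativeWeight (fun k ↦ b ^ (k / q)) where
  pos _ := pow_pos (by linarith) _
  one_le_zero := by simp
  mul_le a c := by
    rw [← pow_add]
    exact pow_le_pow_right₀ hb Nat.div_add_div_le_add_div

lemma tendsto_natCast_div_pow_div {b : ℝ} (hb : 1 < b) {q : ℕ} (hq : q ≠ 0) :
    Tendsto (fun k : ℕ ↦ (k : ℝ) / b ^ (k / q)) atTop (𝓝 0) := by
  have hlim : Tendsto (fun m : ℕ ↦ (q * b) * (((m + 1 : ℕ) : ℝ) ^ 1 / b ^ (m + 1)))
      atTop (𝓝 0) := by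
    simpa using ((tendsto_pow_const_div_const_pow_of_one_lt 1 hb).comp
      (tendsto_add_atTop_nat 1)).const_mul ((q : ℝ) * b)
  refine squeeze_zero (fun k ↦ by positivity) (fun k ↦ ?_)
    (hlim.comp (Nat.tendsto_div_const_atTop hq))
  have hk : (k : ℝ) ≤ q * ((k / q + 1 : ℕ) : ℝ) := by
    exact_mod_cast (Nat.lt_div_mul_add (Nat.pos_of_ne_zero hq)).le.trans_eq (by ring)
  have hb0 : 0 < b ^ (k / q) := by positivity
  simp only [Function.comp_apply, pow_succ]
  rw [div_le_iff₀ hb0]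
  field_simp
  linarith

lemma PowerSeries.norm_coeff_mul_le_of_forall {K : Type*} [NormedField K] [IsUltrametricDist K]
    {f g : K⟦X⟧} {k : ℕ} {c : ℝ} (hc : 0 ≤ c)
    (h : ∀ a b, a + b = k → ‖coeff a f‖ * ‖coeff b g‖ ≤ c) : ‖coeff k (f * g)‖ ≤ c := by
  rw [coeff_mul]
  refine IsUltrametricDist.norm_sum_le_of_forall_le_of_nonneg hc fun x hx ↦ ?_
  rw [norm_mul]
  exact h x.1 x.2 (Finset.HasAntidiagonal.mem_antidiagonal.1 hx)

structure MemWeightedBall {K : Type*} [NormedField K] (w : ℕ → ℝ) (C : ℝ) (f : K⟦X⟧) :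
    Prop where
  norm_coeff_le : ∀ k, ‖coeff k f‖ ≤ C * w k
  tendsto : Tendsto (fun k ↦ ‖coeff k f‖ / w k) atTop (𝓝 0)

namespace MemWeightedBall

variable {K : Type*} [NormedField K] {w : ℕ → ℝ} {A B C D : ℝ} {f g : K⟦X⟧}

lemma nonneg (hw : SubmultiplicativeWeight w) (h : MemWeightedBall w C f) : 0 ≤ C :=
  (mul_nonneg_iff_of_pos_right (hw.pos 0)).1 ((norm_nonneg _).trans (h.norm_coeff_le 0))

lemma exists_norm_coeff_le (hw : SubmultiplicativeWeight w) (h : MemWeightedBall w C f)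
    {δ : ℝ} (hδ : 0 < δ) : ∃ N, ∀ k ≥ N, ‖coeff k f‖ ≤ δ * w k := by
  obtain ⟨N, hN⟩ := eventually_atTop.1 ((tendsto_order.1 h.tendsto).2 δ hδ)
  exact ⟨N, fun k hk ↦ ((div_lt_iff₀ (hw.pos k)).1 (hN k hk)).le⟩

lemma mono (hw : SubmultiplicativeWeight w) (h : MemWeightedBall w C f) (hCD : C ≤ D) :
    MemWeightedBall w D f :=
  ⟨fun k ↦ (h.norm_coeff_le k).trans (by gcongr; exact (hw.pos k).le), h.tendsto⟩

lemma neg (h : MemWeightedBall w C f) : MemWeightedBall w C (-f) :=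
  ⟨by simpa using h.norm_coeff_le, by simpa using h.tendsto⟩

lemma C_mem (hw : SubmultiplicativeWeight w) (c : K) :
    MemWeightedBall w ‖c‖ (PowerSeries.C c) := by
  refine ⟨fun k ↦ ?_, tendsto_const_nhds.congr' ?_⟩
  · rw [coeff_C]
    split_ifs with hk
    · subst hk
      exact le_mul_of_one_le_right (norm_nonneg c) hw.one_le_zero
    · simpa using mul_nonneg (norm_nonneg c) (hw.pos k).le
  · filter_upwards [eventually_ne_atTop 0] with k hk
    simp [coeff_C, hk]

lemma zero (hw : SubmultiplicativeWeight w) (hC : 0 ≤ C) : MemWeightedBall w C (0 : K⟦X⟧) := by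
  simpa using (C_mem hw (0 : K)).mono hw (by simpa using hC)

lemma one (hw : SubmultiplicativeWeight w) : MemWeightedBall w 1 (1 : K⟦X⟧) := by
  simpa using C_mem hw (1 : K)

variable [IsUltrametricDist K]

lemma add (hw : SubmultiplicativeWeight w) (hf : MemWeightedBall w C f)
    (hg : MemWeightedBall w C g) : MemWeightedBall w C (f + g) := by
  refine ⟨fun k ↦ ?_, ?_⟩
  · rw [map_add]
    exact (IsUltrametricDist.norm_add_le_max _ _).trans
      (max_le (hf.norm_coeff_le k) (hg.norm_coeff_le k))
  · refine squeeze_zero (fun k ↦ div_nonneg (norm_nonneg _) (hw.pos k).le) (fun k ↦ ?_)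
      (by simpa using hf.tendsto.add hg.tendsto)
    rw [map_add, ← add_div]
    exact div_le_div_of_nonneg_right (norm_add_le _ _) (hw.pos k).le

lemma sub (hw : SubmultiplicativeWeight w) (hf : MemWeightedBall w C f)
    (hg : MemWeightedBall w C g) : MemWeightedBall w C (f - g) :=
  sub_eq_add_neg f g ▸ hf.add hw hg.neg

lemma sum {ι : Type*} {s : Finset ι} {F : ι → K⟦X⟧} (hw : SubmultiplicativeWeight w)
    (hC : 0 ≤ C) (h : ∀ i ∈ s, MemWeightedBall w C (F i)) :
    MemWeightedBall w C (∑ i ∈ s, F i) :=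
  Finset.sum_induction F _ (fun _ _ ↦ add hw) (zero hw hC) h

lemma mul (hw : SubmultiplicativeWeight w) (hf : MemWeightedBall w A f)
    (hg : MemWeightedBall w B g) : MemWeightedBall w (A * B) (f * g) := by
  have hA := hf.nonneg hw
  have hB := hg.nonneg hw
  refine ⟨fun k ↦ norm_coeff_mul_le_of_forall (by have := hw.pos k; positivity)
    fun a b hab ↦ hab ▸ hw.mul_le_mul (norm_nonneg _) (norm_nonneg _)
      (hf.norm_coeff_le a) (hg.norm_coeff_le b), ?_⟩
  refine tendsto_order.2 ⟨fun c hc ↦ Eventually.of_forall fun k ↦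
    hc.trans_le (div_nonneg (norm_nonneg _) (hw.pos k).le), fun ε hε ↦ ?_⟩
  -- beyond `Nf + Ng`, one of the two indices of every product `f_a g_b` is in a tail
  set δ := ε / (A + B + 1)
  have hδ : 0 < δ := by positivity
  obtain ⟨Nf, hNf⟩ := hf.exists_norm_coeff_le hw hδ
  obtain ⟨Ng, hNg⟩ := hg.exists_norm_coeff_le hw hδ
  filter_upwards [eventually_ge_atTop (Nf + Ng)] with k hk
  have hbound : ‖coeff k (f * g)‖ ≤ δ * (A + B) * w k := by
    refine norm_coeff_mul_le_of_forall (by have := hw.pos k; positivity) fun a b hab ↦ ?_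
    rcases le_or_gt Nf a with ha | ha
    · calc _ ≤ δ * B * w k := hab ▸ hw.mul_le_mul (norm_nonneg _) (norm_nonneg _)
            (hNf a ha) (hg.norm_coeff_le b)
        _ ≤ δ * (A + B) * w k := by gcongr; exacts [(hw.pos k).le, by linarith]
    · calc _ ≤ A * δ * w k := hab ▸ hw.mul_le_mul (norm_nonneg _) (norm_nonneg _)
            (hf.norm_coeff_le a) (hNg b (by omega))
        _ ≤ δ * (A + B) * w k := by
          rw [mul_comm A]; gcongr; exacts [(hw.pos k).le, by linarith]
  have hδAB : δ * (A + B) < ε := by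
    rw [div_mul_eq_mul_div, div_lt_iff₀ (by positivity)]
    nlinarith
  rw [div_lt_iff₀ (hw.pos k)]
  exact hbound.trans_lt (by gcongr; exact hw.pos k)

lemma prod {ι : Type*} (s : Finset ι) {F : ι → K⟦X⟧} {D : ι → ℝ}
    (hw : SubmultiplicativeWeight w) (h : ∀ i ∈ s, MemWeightedBall w (D i) (F i)) :
    MemWeightedBall w (∏ i ∈ s, D i) (∏ i ∈ s, F i) := by
  classical
  induction s using Finset.induction_on with
  | empty => simpa using one hw
  | insert a s ha ih =>
    rw [Finset.prod_insert ha, Finset.prod_insert ha]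
    exact (h a (s.mem_insert_self a)).mul hw (ih fun i hi ↦ h i (Finset.mem_insert_of_mem hi))

end MemWeightedBall

lemma Padic.norm_natCast_inv {p : ℕ} [Fact p.Prime] {k : ℕ} (hk : k ≠ 0) :
    ‖((k : ℚ_[p]))⁻¹‖ = (p : ℝ) ^ padicValNat p k := by
  rw [norm_inv, Padic.norm_eq_zpow_neg_valuation (Nat.cast_ne_zero.2 hk),
    Padic.valuation_natCast, zpow_neg, inv_inv, zpow_natCast]

lemma padicValNat_lt_add_div_pow {p : ℕ} [hp : Fact p.Prime] (m : ℕ) {k : ℕ} (hk : k ≠ 0) :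
    padicValNat p k < m + k / p ^ m := by
  by_cases hv : padicValNat p k < m
  · exact hv.trans_le (Nat.le_add_right _ _)
  · have hdvd : p ^ (padicValNat p k - m) ≤ k / p ^ m := by
      rw [← Nat.pow_div (by omega) hp.out.pos]
      exact Nat.div_le_div_right (Nat.le_of_dvd (Nat.pos_of_ne_zero hk) pow_padicValNat_dvd)
    have := Nat.lt_pow_self (n := padicValNat p k - m) hp.out.one_lt
    omega

lemma two_mul_padicValNat_factorial_le {p : ℕ} [hp : Fact p.Prime] (hp2 : p ≠ 2) (i : ℕ) :
    2 * padicValNat p i.factorial ≤ i := by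
  have hlegendre := sub_one_mul_padicValNat_factorial (p := p) i
  have hp3 : 2 ≤ p - 1 := by have := hp.out.two_le; omega
  calc 2 * padicValNat p i.factorial ≤ (p - 1) * padicValNat p i.factorial := by gcongr
    _ ≤ i := by omega

lemma pow_mul_inv_pow_le {x : ℝ} (hx : 1 ≤ x) {a b c : ℕ} (h : a + c ≤ b) :
    x ^ a * x⁻¹ ^ b ≤ x⁻¹ ^ c := by
  have : 0 < x := by linarith
  rw [inv_pow, inv_pow, ← div_eq_mul_inv, div_le_iff₀ (by positivity), inv_mul_eq_div,
    le_div_iff₀ (by positivity), ← pow_add]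
  exact pow_le_pow_right₀ hx h

lemma norm_pow_succ_sub_pow_succ_le {K : Type*} [NormedField K] [IsUltrametricDist K] {r : ℝ}
    {x y : K} (hx : ‖x‖ ≤ r) (hy : ‖y‖ ≤ r) (m : ℕ) :
    ‖x ^ (m + 1) - y ^ (m + 1)‖ ≤ r ^ m * ‖x - y‖ := by
  have hr : 0 ≤ r := (norm_nonneg x).trans hx
  rw [← geom_sum₂_mul x y (m + 1), norm_mul]
  gcongr
  refine IsUltrametricDist.norm_sum_le_of_forall_le_of_nonneg (by positivity) fun i hi ↦ ?_
  rw [norm_mul, norm_pow, norm_pow]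
  calc _ ≤ r ^ i * r ^ (m + 1 - 1 - i) := by gcongr
    _ = r ^ m := by rw [← pow_add]; congr 1; have := Finset.mem_range.1 hi; omega

/-- The weight of `Λ = ℤ_p[[T]]⟨T^{p^m}/p⟩`: the `MemWeightedBall`s for it are the `p^s Λ`. -/
noncomputable def lambdaWeight (p m k : ℕ) : ℝ := (p : ℝ) ^ (k / p ^ m)

section Lambda

variable {p : ℕ} [hp : Fact p.Prime]

lemma one_lt_natCast_prime : (1 : ℝ) < p := by exact_mod_cast hp.out.one_lt

lemma lambdaWeight_submultiplicative (m : ℕ) : SubmultiplicativeWeight (lambdaWeight p m) :=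
  SubmultiplicativeWeight.pow_div one_lt_natCast_prime.le _

lemma memLambda_iff {n : ℕ} {s : ℝ} {f : ℚ_[p]⟦X⟧} :
    MemLambda p n s f ↔ MemWeightedBall (lambdaWeight p (n - 1)) ((p : ℝ) ^ (-s)) f :=
  ⟨fun h ↦ ⟨h.1, h.2⟩, fun h ↦ ⟨h.1, h.2⟩⟩

lemma norm_coeff_logFactor (t : ℕ) {k : ℕ} (hk : k ≠ 0) :
    ‖coeff k (C ((p : ℚ_[p]))⁻¹ * logOnePlusT p - (t : ℚ_[p]⟦X⟧))‖ =
      (p : ℝ) ^ (padicValNat p k + 1) := by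
  rw [map_sub, coeff_C_mul, logOnePlusT, coeff_mk, if_neg hk, ← map_natCast (C (R := ℚ_[p])),
    coeff_C, if_neg hk, sub_zero, norm_mul, norm_div, norm_pow, norm_neg, norm_one, one_pow,
    one_div, ← norm_inv, Padic.norm_natCast_inv hk, norm_inv, Padic.norm_p, inv_inv, pow_succ,
    mul_comm]

lemma memWeightedBall_logFactor (m t : ℕ) :
    MemWeightedBall (lambdaWeight p m) ((p : ℝ) ^ m)
      (C ((p : ℚ_[p]))⁻¹ * logOnePlusT p - (t : ℚ_[p]⟦X⟧)) := by
  have hp1 := one_lt_natCast_prime (p := p)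
  refine ⟨fun k ↦ ?_, ?_⟩
  · rcases eq_or_ne k 0 with rfl | hk
    · have ht : ‖(t : ℚ_[p])‖ ≤ 1 := by simpa using Padic.norm_int_le_one (p := p) t
      rw [map_sub, coeff_C_mul, logOnePlusT, coeff_mk, if_pos rfl,
        ← map_natCast (C (R := ℚ_[p])), coeff_C, if_pos rfl, mul_zero, zero_sub, norm_neg,
        lambdaWeight, Nat.zero_div, pow_zero, mul_one]
      exact ht.trans (one_le_pow₀ hp1.le)
    · rw [norm_coeff_logFactor t hk, lambdaWeight, ← pow_add]
      exact pow_le_pow_right₀ hp1.le (padicValNat_lt_add_div_pow m hk)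
  · -- `‖1/(pk)‖ ≤ p k`, and `k` is `o` of the weight
    have hlim :=
      (tendsto_natCast_div_pow_div hp1 (pow_ne_zero m hp.out.ne_zero)).const_mul (p : ℝ)
    rw [mul_zero] at hlim
    refine squeeze_zero' (Eventually.of_forall fun k ↦ ?_) ?_ hlim
    · exact div_nonneg (norm_nonneg _) ((lambdaWeight_submultiplicative m).pos k).le
    filter_upwards [eventually_ne_atTop 0] with k hk
    rw [norm_coeff_logFactor t hk, pow_succ, mul_comm, mul_div_assoc, lambdaWeight]
    gcongr
    exact_mod_cast Nat.le_of_dvd (Nat.pos_of_ne_zero hk) pow_padicValNat_dvd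

lemma memWeightedBall_binomGM (m i : ℕ) :
    MemWeightedBall (lambdaWeight p m) ((p : ℝ) ^ padicValNat p i.factorial * ((p : ℝ) ^ m) ^ i)
      (binomGM p i) := by
  have hW := lambdaWeight_submultiplicative (p := p) m
  have h := (MemWeightedBall.C_mem hW ((i.factorial : ℚ_[p]))⁻¹).mul hW
    (MemWeightedBall.prod (Finset.range i) hW fun t _ ↦ memWeightedBall_logFactor m t)
  rw [binomGM]
  simpa [Padic.norm_natCast_inv i.factorial_ne_zero, Finset.prod_const] using h

end Lambda

section PadicExp

variable {p : ℕ} [hp : Fact p.Prime]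

lemma norm_inv_factorial_mul_pow_le (hp2 : p ≠ 2) {x : ℚ_[p]} (hx : ‖x‖ ≤ (p : ℝ)⁻¹) (m : ℕ) :
    ‖((m.factorial : ℚ_[p]))⁻¹ * x ^ m‖ ≤ (p : ℝ)⁻¹ ^ (m - m / 2) := by
  rw [norm_mul, norm_pow, Padic.norm_natCast_inv m.factorial_ne_zero]
  calc _ ≤ (p : ℝ) ^ padicValNat p m.factorial * (p : ℝ)⁻¹ ^ m := by gcongr
    _ ≤ _ := pow_mul_inv_pow_le one_lt_natCast_prime.le
          (by have := two_mul_padicValNat_factorial_le hp2 m; omega)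

lemma summable_padicExp (hp2 : p ≠ 2) {x : ℚ_[p]} (hx : ‖x‖ ≤ (p : ℝ)⁻¹) :
    Summable fun m : ℕ ↦ ((m.factorial : ℚ_[p]))⁻¹ * x ^ m := by
  refine NonarchimedeanAddGroup.summable_of_tendsto_cofinite_zero ?_
  rw [Nat.cofinite_eq_atTop, tendsto_zero_iff_norm_tendsto_zero]
  refine squeeze_zero (fun _ ↦ norm_nonneg _) (norm_inv_factorial_mul_pow_le hp2 hx) ?_
  exact (tendsto_pow_atTop_nhds_zero_of_lt_one (by positivity)
    (inv_lt_one_of_one_lt₀ one_lt_natCast_prime)).comp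
      (tendsto_atTop_atTop.2 fun b ↦ ⟨2 * b, fun m hm ↦ by omega⟩)

lemma norm_padicExp_sub_padicExp_le (hp2 : p ≠ 2) {x y : ℚ_[p]} (hx : ‖x‖ ≤ (p : ℝ)⁻¹)
    (hy : ‖y‖ ≤ (p : ℝ)⁻¹) : ‖padicExp x - padicExp y‖ ≤ ‖x - y‖ := by
  rw [padicExp, padicExp, ← (summable_padicExp hp2 hx).tsum_sub (summable_padicExp hp2 hy)]
  refine IsUltrametricDist.norm_tsum_le_of_forall_le_of_nonneg (norm_nonneg _) fun m ↦ ?_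
  rw [← mul_sub]
  rcases m with _ | m
  · simp
  -- `v_p((m+1)!) ≤ m`, while `x^(m+1) - y^(m+1)` gains `m` factors of size `≤ 1/p`
  rw [norm_mul, Padic.norm_natCast_inv (m + 1).factorial_ne_zero]
  calc _ ≤ (p : ℝ) ^ padicValNat p (m + 1).factorial * ((p : ℝ)⁻¹ ^ m * ‖x - y‖) := by
        gcongr; exact norm_pow_succ_sub_pow_succ_le hx hy m
    _ = (p : ℝ) ^ padicValNat p (m + 1).factorial * (p : ℝ)⁻¹ ^ m * ‖x - y‖ := by ring
    _ ≤ (p : ℝ)⁻¹ ^ 0 * ‖x - y‖ := by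
        gcongr
        exact pow_mul_inv_pow_le one_lt_natCast_prime.le
          (by have := two_mul_padicValNat_factorial_le hp2 (m + 1); omega)
    _ = ‖x - y‖ := by simp

lemma padicExp_zero : padicExp (0 : ℚ_[p]) = 1 := by
  rw [padicExp, tsum_eq_single 0 fun m hm ↦ by simp [zero_pow hm]]
  simp

lemma norm_padicExp (hp2 : p ≠ 2) {x : ℚ_[p]} (hx : ‖x‖ ≤ (p : ℝ)⁻¹) : ‖padicExp x‖ = 1 := by
  have h := norm_padicExp_sub_padicExp_le hp2 hx (y := 0) (by simp)
  rw [padicExp_zero, sub_zero] at h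
  refine (Padic.norm_eq_of_norm_sub_lt_right ?_).trans norm_one
  rw [norm_one]
  exact h.trans_lt (hx.trans_lt (inv_lt_one_of_one_lt₀ one_lt_natCast_prime))

lemma norm_mul_p_le (a : ℚ_[p]) (ha : ‖a‖ ≤ 1) : ‖a * p‖ ≤ (p : ℝ)⁻¹ := by
  rw [norm_mul, Padic.norm_p]
  exact mul_le_of_le_one_left (by positivity) ha

lemma norm_twistElt_le (hp2 : p ≠ 2) {α : ℚ_[p]} (hα : ‖α‖ ≤ 1) (j : ℕ) :
    ‖twistElt α j‖ ≤ ‖α - j‖ * (p : ℝ)⁻¹ := by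
  have hj : ‖(j : ℚ_[p]) * p‖ ≤ (p : ℝ)⁻¹ :=
    norm_mul_p_le _ (by simpa using Padic.norm_int_le_one (p := p) j)
  rw [twistElt, norm_div, norm_padicExp hp2 hj, div_one, ← Padic.norm_p (p := p), ← norm_mul,
    sub_mul]
  exact norm_padicExp_sub_padicExp_le hp2 (norm_mul_p_le α hα) hj

end PadicExp

section Series

variable {p n : ℕ} [hp : Fact p.Prime] {α : ℚ_[p]} {j : ℕ}

lemma norm_twistElt_le_inv_pow (hp2 : p ≠ 2) (hn : 1 ≤ n) (hα : ‖α‖ ≤ 1)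
    (hcong : ‖α - (j : ℚ_[p])‖ ≤ (p : ℝ) ^ (-((n : ℤ) - 1))) :
    ‖twistElt α j‖ ≤ (p : ℝ)⁻¹ ^ n := by
  rw [show -((n : ℤ) - 1) = -((n - 1 : ℕ) : ℤ) by omega, zpow_neg, zpow_natCast, ← inv_pow]
    at hcong
  calc ‖twistElt α j‖ ≤ ‖α - j‖ * (p : ℝ)⁻¹ := norm_twistElt_le hp2 hα j
    _ ≤ (p : ℝ)⁻¹ ^ (n - 1) * (p : ℝ)⁻¹ := by gcongr
    _ = (p : ℝ)⁻¹ ^ n := by rw [← pow_succ, Nat.sub_add_cancel hn]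

lemma pow_padicValNat_factorial_mul_inv_pow_le (hp2 : p ≠ 2) (i : ℕ) :
    (p : ℝ) ^ padicValNat p i.factorial * (p : ℝ)⁻¹ ^ i ≤ (p : ℝ) ^ (-(i : ℝ) / 2) := by
  have hp0 : (0 : ℝ) < p := Nat.cast_pos.2 hp.out.pos
  rw [← Real.rpow_natCast, inv_pow, ← Real.rpow_natCast, ← Real.rpow_neg hp0.le,
    ← Real.rpow_add hp0]
  refine Real.rpow_le_rpow_of_exponent_le one_lt_natCast_prime.le ?_
  have : (2 * padicValNat p i.factorial : ℝ) ≤ i := by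
    exact_mod_cast two_mul_padicValNat_factorial_le hp2 i
  linarith

lemma memWeightedBall_twistElt_pow_mul_binomGM (hp2 : p ≠ 2) (hn : 1 ≤ n) (hα : ‖α‖ ≤ 1)
    (hcong : ‖α - (j : ℚ_[p])‖ ≤ (p : ℝ) ^ (-((n : ℤ) - 1))) (i : ℕ) :
    MemWeightedBall (lambdaWeight p (n - 1)) ((p : ℝ) ^ (-(i : ℝ) / 2))
      (C (twistElt α j ^ i) * binomGM p i) := by
  have hW := lambdaWeight_submultiplicative (p := p) (n - 1)
  have hc : ‖twistElt α j‖ * (p : ℝ) ^ (n - 1) ≤ (p : ℝ)⁻¹ := by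
    calc _ ≤ (p : ℝ)⁻¹ ^ n * (p : ℝ) ^ (n - 1) := by
          gcongr; exact norm_twistElt_le_inv_pow hp2 hn hα hcong
      _ = (p : ℝ)⁻¹ := by
          rw [← Nat.sub_add_cancel hn, Nat.add_sub_cancel, pow_succ, mul_right_comm, ← mul_pow,
            inv_mul_cancel₀ (Nat.cast_ne_zero.2 hp.out.ne_zero), one_pow, one_mul]
  refine ((MemWeightedBall.C_mem hW _).mul hW (memWeightedBall_binomGM (n - 1) i)).mono hW ?_
  calc _ = (p : ℝ) ^ padicValNat p i.factorial * (‖twistElt α j‖ * (p : ℝ) ^ (n - 1)) ^ i := by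
        rw [norm_pow, mul_pow]; ring
    _ ≤ (p : ℝ) ^ padicValNat p i.factorial * (p : ℝ)⁻¹ ^ i := by gcongr
    _ ≤ _ := pow_padicValNat_factorial_mul_inv_pow_le hp2 i

lemma memWeightedBall_sum_Ico_twistElt_pow_mul_binomGM (hp2 : p ≠ 2) (hn : 1 ≤ n)
    (hα : ‖α‖ ≤ 1) (hcong : ‖α - (j : ℚ_[p])‖ ≤ (p : ℝ) ^ (-((n : ℤ) - 1))) (s : ℝ) (K : ℕ) :
    MemWeightedBall (lambdaWeight p (n - 1)) ((p : ℝ) ^ (-s))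
      (∑ i ∈ Finset.Ico ⌈2 * s⌉₊ K, C (twistElt α j ^ i) * binomGM p i) := by
  have hW := lambdaWeight_submultiplicative (p := p) (n - 1)
  refine MemWeightedBall.sum hW (by positivity) fun i hi ↦
    (memWeightedBall_twistElt_pow_mul_binomGM hp2 hn hα hcong i).mono hW <|
      Real.rpow_le_rpow_of_exponent_le one_lt_natCast_prime.le ?_
  linarith [(Nat.ceil_le.1 (Finset.mem_Ico.1 hi).1 : 2 * s ≤ i)]

end Series

theorem binom_series_converges_general (p n : ℕ) [Fact p.Prime] (hodd : p ≠ 2) (hn : 1 ≤ n)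
    (α : ℚ_[p]) (hα : ‖α‖ ≤ 1) (j : ℕ)
    (hcong : ‖α - (j : ℚ_[p])‖ ≤ (p : ℝ) ^ (-((n : ℤ) - 1))) :
    (∀ i : ℕ, ‖(twistElt α j) ^ i‖ ≤ (p : ℝ) ^ (-((i * n : ℕ) : ℤ))) ∧
    (∀ i : ℕ, MemLambda p n (-(i : ℝ) * ((n : ℝ) - (p : ℝ) / ((p : ℝ) - 1)))
        (PowerSeries.C ((twistElt α j) ^ i) * binomGM p i)) ∧
    (∀ s : ℝ, ∃ N₀ : ℕ, ∀ N M : ℕ, N₀ ≤ N → N₀ ≤ M →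
        MemLambda p n s
          ((∑ i ∈ Finset.range N, PowerSeries.C ((twistElt α j) ^ i) * binomGM p i) -
            ∑ i ∈ Finset.range M, PowerSeries.C ((twistElt α j) ^ i) * binomGM p i)) := by
  have hW := lambdaWeight_submultiplicative (p := p) (n - 1)
  have hp1 := one_lt_natCast_prime (p := p)
  refine ⟨fun i ↦ ?_, fun i ↦ ?_, fun s ↦ ⟨⌈2 * s⌉₊, fun N M hN hM ↦ ?_⟩⟩
  · rw [norm_pow, zpow_neg, zpow_natCast, mul_comm, pow_mul, ← inv_pow, ← inv_pow]
    exact pow_le_pow_left₀ (norm_nonneg _) (norm_twistElt_le_inv_pow hodd hn hα hcong) i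
  · have hp3 : (3 : ℝ) ≤ p := by
      have := (Fact.out : p.Prime).two_le; exact_mod_cast (show 3 ≤ p by omega)
    have hfrac : (p : ℝ) / (p - 1) ≤ n + 1 / 2 := by
      rw [div_le_iff₀ (by linarith)]
      nlinarith [(by exact_mod_cast hn : (1 : ℝ) ≤ n)]
    rw [memLambda_iff]
    refine (memWeightedBall_twistElt_pow_mul_binomGM hodd hn hα hcong i).mono hW
      (Real.rpow_le_rpow_of_exponent_le hp1.le ?_)
    nlinarith [(Nat.cast_nonneg i : (0 : ℝ) ≤ i)]
  · have htail := memWeightedBall_sum_Ico_twistElt_pow_mul_binomGM hodd hn hα hcong s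
    rw [memLambda_iff, ← sub_sub_sub_cancel_right _ _
      (∑ i ∈ Finset.range ⌈2 * s⌉₊, C (twistElt α j ^ i) * binomGM p i),
      ← Finset.sum_Ico_eq_sub _ hN, ← Finset.sum_Ico_eq_sub _ hM]
    exact (htail N).sub hW (htail M)

/-- For `p` odd, `n ≥ 1`, `α ∈ ℤ_p` and `0 ≤ j < p^{n-1}` with `α ≡ j mod p^{n-1}`, the
series `∑_{i ≥ 0} binom(p^{-1}u_n, i)·((exp(αp) − exp(jp))/exp(jp))^i` converges in
`Λ[1/p]` (partial sums are Cauchy for the `p`-adic topology with unit ball `Λ`), because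
`((exp(αp) − exp(jp))/exp(jp))^i ∈ p^{in}·ℤ_p` and
`binom(p^{-1}u_n, i) ∈ p^{-i(n − p/(p-1))}·Λ`. -/
theorem binom_series_converges (p n : ℕ) [Fact p.Prime] (hodd : p ≠ 2) (hn : 1 ≤ n)
    (α : ℚ_[p]) (hα : ‖α‖ ≤ 1) (j : ℕ) (hj : j < p ^ (n - 1))
    (hcong : ‖α - (j : ℚ_[p])‖ ≤ (p : ℝ) ^ (-((n : ℤ) - 1))) :
    (∀ i : ℕ, ‖(twistElt α j) ^ i‖ ≤ (p : ℝ) ^ (-((i * n : ℕ) : ℤ))) ∧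
    (∀ i : ℕ, MemLambda p n (-(i : ℝ) * ((n : ℝ) - (p : ℝ) / ((p : ℝ) - 1)))
        (PowerSeries.C ((twistElt α j) ^ i) * binomGM p i)) ∧
    (∀ s : ℝ, ∃ N₀ : ℕ, ∀ N M : ℕ, N₀ ≤ N → N₀ ≤ M →
        MemLambda p n s
          ((∑ i ∈ Finset.range N, PowerSeries.C ((twistElt α j) ^ i) * binomGM p i) -
            ∑ i ∈ Finset.range M, PowerSeries.C ((twistElt α j) ^ i) * binomGM p i)) :=
  binom_series_converges_general p n hodd hn α hα j hcong
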